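/- Let c be an edge-coloring of K_{n,n} = G(U,V), n ≥ 3, using at least 4 colors, with no rainbow K_{1,3}. Suppose some vertex u₁ ∈ U sees exactly the color set {1,4} and some vertex u₂ ∈ U sees exactly the color set {2,3}. Then every vertex u ∈ U sees only colors from {1,2,3,4}. -/

import Mathlib

open Function Finset SimpleGraph

/-- A rainbow path on 4 vertices `u₁ v₁ u₂ v₂` (middle pattern). -/
def rbP4pat {N : ℕ} {γ : Type*} (c : Fin N → Fin N → γ) : Prop :=
  ∃ u₁ u₂ v₁ v₂ : Fin N, u₁ ≠ u₂ ∧ v₁ ≠ v₂ ∧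
    c u₁ v₁ ≠ c u₂ v₁ ∧ c u₁ v₁ ≠ c u₂ v₂ ∧ c u₂ v₁ ≠ c u₂ v₂

/-- The coloring `c` of `K_{N,N}` contains a rainbow path on 4 vertices. -/
def hasRainbowP4 {N : ℕ} {γ : Type*} (c : Fin N → Fin N → γ) : Prop :=
  rbP4pat c ∨ rbP4pat (fun v u => c u v)

/-- A rainbow path on 5 vertices `u₁ v₁ u₂ v₂ u₃` (one-sided pattern). -/
def rbP5pat {N : ℕ} {γ : Type*} (c : Fin N → Fin N → γ) : Prop :=
  ∃ u₁ u₂ u₃ v₁ v₂ : Fin N, u₁ ≠ u₂ ∧ u₁ ≠ u₃ ∧ u₂ ≠ u₃ ∧ v₁ ≠ v₂ ∧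
    c u₁ v₁ ≠ c u₂ v₁ ∧ c u₁ v₁ ≠ c u₂ v₂ ∧ c u₁ v₁ ≠ c u₃ v₂ ∧
    c u₂ v₁ ≠ c u₂ v₂ ∧ c u₂ v₁ ≠ c u₃ v₂ ∧ c u₂ v₂ ≠ c u₃ v₂

/-- The coloring `c` of `K_{N,N}` contains a rainbow path on 5 vertices. -/
def hasRainbowP5 {N : ℕ} {γ : Type*} (c : Fin N → Fin N → γ) : Prop :=
  rbP5pat c ∨ rbP5pat (fun v u => c u v)

/-- The coloring `c` of `K_{N,N}` contains a rainbow star `K_{1,3}`: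
some vertex (on either side) has three incident edges with pairwise distinct colors. -/
def hasRainbowK13 {N : ℕ} {γ : Type*} (c : Fin N → Fin N → γ) : Prop :=
  (∃ u v₁ v₂ v₃ : Fin N, c u v₁ ≠ c u v₂ ∧ c u v₁ ≠ c u v₃ ∧ c u v₂ ≠ c u v₃) ∨
  (∃ v u₁ u₂ u₃ : Fin N, c u₁ v ≠ c u₂ v ∧ c u₁ v ≠ c u₃ v ∧ c u₂ v ≠ c u₃ v)

/-- The coloring `c` of `K_{N,N}` (first coordinate: side `U`, second: side `V`)
contains a monochromatic copy of the (bipartite) graph `H`. -/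
def hasMonoCopy {N : ℕ} {γ : Type*} {α : Type*} (c : Fin N → Fin N → γ)
    (H : SimpleGraph α) : Prop :=
  ∃ i : γ, ∃ f : α → Fin N ⊕ Fin N, Function.Injective f ∧
    ∀ a b, H.Adj a b → ∃ u v : Fin N, c u v = i ∧
      ((f a = Sum.inl u ∧ f b = Sum.inr v) ∨ (f a = Sum.inr v ∧ f b = Sum.inl u))

/-- The coloring `c` of `K_{N,N}` contains a monochromatic copy of `K_{s,t}`
(in either orientation with respect to the two sides). -/
def hasMonoKst {N : ℕ} {γ : Type*} (c : Fin N → Fin N → γ) (s t : ℕ) : Prop :=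
  ∃ i : γ, ∃ S T : Finset (Fin N),
    ((S.card = s ∧ T.card = t) ∨ (S.card = t ∧ T.card = s)) ∧
    ∀ u ∈ S, ∀ v ∈ T, c u v = i

/-- Disjoint union of a family of graphs, on the sigma type. -/
def sigmaUnion {ι : Type*} {β : ι → Type*} (G : ∀ i, SimpleGraph (β i)) :
    SimpleGraph (Σ i, β i) where
  Adj x y := ∃ i a b, (G i).Adj a b ∧ x = ⟨i, a⟩ ∧ y = ⟨i, b⟩
  symm := ⟨by rintro x y ⟨i, a, b, h, rfl, rfl⟩; exact ⟨i, b, a, h.symm, rfl, rfl⟩⟩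
  loopless := ⟨by
    rintro x ⟨i, a, b, h, rfl, h2⟩
    obtain rfl : a = b := by simpa using h2
    exact (G i).loopless.irrefl a h⟩

theorem eq_or_eq_of_not_hasRainbowK13 {N : ℕ} {γ : Type*} {c : Fin N → Fin N → γ}
    (h : ¬ hasRainbowK13 c) {u₁ u₂ v : Fin N} (hne : c u₁ v ≠ c u₂ v) (u : Fin N) :
    c u v = c u₁ v ∨ c u v = c u₂ v := by
  by_contra! hu
  exact h (Or.inr ⟨v, u₁, u₂, u, hne, hu.1.symm, hu.2.symm⟩)

theorem stmt1_general (n : ℕ) (c : Fin n → Fin n → ℕ)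
    (h : ¬ hasRainbowK13 c)
    (u₁ u₂ : Fin n)
    (h1 : Finset.univ.image (fun v => c u₁ v) = ({1, 4} : Finset ℕ))
    (h2 : Finset.univ.image (fun v => c u₂ v) = ({2, 3} : Finset ℕ)) :
    ∀ u : Fin n, Finset.univ.image (fun v => c u v) ⊆ ({1, 2, 3, 4} : Finset ℕ) := by
  intro u x hx
  obtain ⟨v, -, rfl⟩ := mem_image.mp hx
  have h1v : c u₁ v ∈ ({1, 4} : Finset ℕ) := h1 ▸ mem_image_of_mem _ (mem_univ v)
  have h2v : c u₂ v ∈ ({2, 3} : Finset ℕ) := h2 ▸ mem_image_of_mem _ (mem_univ v)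
  simp only [mem_insert, mem_singleton] at h1v h2v ⊢
  rcases eq_or_eq_of_not_hasRainbowK13 h
      (show c u₁ v ≠ c u₂ v by omega) u with hu | hu <;> omega

/-- if at least 4 colors are used, no rainbow `K_{1,3}`, and vertices
`u₁, u₂` of `U` see exactly the color sets `{1,4}` and `{2,3}` respectively,
then every vertex of `U` sees only colors from `{1,2,3,4}`. -/
theorem stmt1 (n : ℕ) (hn : 3 ≤ n) (c : Fin n → Fin n → ℕ)
    (hk : 4 ≤ ((Finset.univ ×ˢ Finset.univ).image (fun p : Fin n × Fin n => c p.1 p.2)).card)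
    (h : ¬ hasRainbowK13 c)
    (u₁ u₂ : Fin n)
    (h1 : Finset.univ.image (fun v => c u₁ v) = ({1, 4} : Finset ℕ))
    (h2 : Finset.univ.image (fun v => c u₂ v) = ({2, 3} : Finset ℕ)) :
    ∀ u : Fin n, Finset.univ.image (fun v => c u v) ⊆ ({1, 2, 3, 4} : Finset ℕ) :=
  stmt1_general n c h u₁ u₂ h1 h2
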